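/- For x,y ∈ X and V,W ⊆ G open nonempty: y ∈ (V·x)^{*W} if and only if (y,W) ≤_α (x,V) for every countable ordinal α. Consequently, if (y,W) ≤_α (x,V) for every α then y and x are orbit equivalent. -/

import Mathlib

open Set

variable {G X : Type*}

open Classical in
/-- Hjorth's relation `(x₀,V₀) ≤_α (x₁,V₁)`. -/
noncomputable def HLe [Group G] [TopologicalSpace G] [TopologicalSpace X] [MulAction G X]
    (α : Ordinal) (x₀ : X) (V₀ : Set G) (x₁ : X) (V₁ : Set G) : Prop :=
  if α ≤ 1 then
    closure ((· • x₀) '' V₀) ⊆ closure ((· • x₁) '' V₁)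
  else if h : ∃ β, α = β + 1 then
    ∀ W₀ : Set G, IsOpen W₀ → W₀.Nonempty → W₀ ⊆ V₀ →
      ∃ W₁ : Set G, IsOpen W₁ ∧ W₁.Nonempty ∧ W₁ ⊆ V₁ ∧ HLe h.choose x₁ W₁ x₀ W₀
  else
    ∀ β, 1 ≤ β → β < α → HLe β x₀ V₀ x₁ V₁
termination_by α
decreasing_by
  · conv_rhs => rw [h.choose_spec]
    exact lt_of_lt_of_le (Order.lt_succ _) (le_of_eq (Ordinal.add_one_eq_succ _).symm)
  · assumption

open Classical in
/-- Level `α` of the `Π⁰` Borel hierarchy (`Π⁰_1` = closed sets). -/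
noncomputable def Pi0 {Y : Type*} [TopologicalSpace Y] (α : Ordinal) : Set (Set Y) :=
  if α ≤ 1 then {A | IsClosed A}
  else {A | ∃ f : ℕ → Set Y,
        (∀ n, ∃ β, ∃ _ : 1 ≤ β, ∃ _ : β < α, f n ∈ Pi0 β) ∧ A = ⋂ n, (f n)ᶜ}
termination_by α
decreasing_by assumption

/-- The Vaught transform `A^{*W}`. -/
def vaughtStar [Group G] [TopologicalSpace G] [MulAction G X]
    (A : Set X) (W : Set G) : Set X :=
  {x | IsMeagre (W \ {g : G | g • x ∈ A})}

/-- Hjorth's equivalence relation `x ≡_α y`. -/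
def HEquiv [Group G] [TopologicalSpace G] [TopologicalSpace X] [MulAction G X]
    (α : Ordinal) (x y : X) : Prop :=
  (∀ V : Set G, IsOpen V → V.Nonempty →
      ∃ W : Set G, IsOpen W ∧ W.Nonempty ∧ HLe α y W x V) ∧
  (∀ V : Set G, IsOpen V → V.Nonempty →
      ∃ W : Set G, IsOpen W ∧ W.Nonempty ∧ HLe α x W y V)

/-- The Hjorth rank `δ(x)`, relative to a countable basis `B₀`. -/
noncomputable def hjorthRank [Group G] [TopologicalSpace G] [TopologicalSpace X] [MulAction G X]
    (B₀ : Set (Set G)) (x : X) : Ordinal :=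
  sInf {α | ∀ V₀ ∈ B₀, ∀ V₁ ∈ B₀, ∀ W₀ ∈ B₀, ∀ W₁ ∈ B₀,
    closure W₀ ⊆ V₀ → closure V₁ ⊆ W₁ →
    HLe α x V₀ x V₁ → HLe (α + 1) x W₀ x W₁}

set_option linter.unusedSectionVars false

universe u

theorem ord_succ_inj {a b : Ordinal} (h : a + 1 = b + 1) : a = b := by
  rw [Ordinal.add_one_eq_succ, Ordinal.add_one_eq_succ] at h
  exact Order.succ_eq_succ_iff.mp h
theorem ord_lt_succ (β : Ordinal) : β < β + 1 := Ordinal.add_one_eq_succ β ▸ Order.lt_succ β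
theorem ord_lt_succ_iff {α β : Ordinal} : β < α + 1 ↔ β ≤ α := by
  rw [Ordinal.add_one_eq_succ]; exact Order.lt_succ_iff
theorem ord_succ_not_le_one {β : Ordinal} (hβ : 1 ≤ β) : ¬ (β + 1 ≤ 1) :=
  not_le_of_gt (lt_of_le_of_lt hβ (ord_lt_succ β))
theorem ord_succ_lt_succ {α β : Ordinal} (h : β < α) : β + 1 < α + 1 := by
  rw [Ordinal.add_one_eq_succ, Ordinal.add_one_eq_succ]; exact Order.succ_lt_succ h
theorem ord_cases (α : Ordinal) :
    α ≤ 1 ∨ (∃ β, 1 ≤ β ∧ α = β + 1) ∨ (¬ α ≤ 1 ∧ ¬ ∃ β, α = β + 1) := by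
  by_cases h1 : α ≤ 1
  · exact Or.inl h1
  by_cases h2 : ∃ β : Ordinal, α = β + 1
  · obtain ⟨β, rfl⟩ := h2
    refine Or.inr (Or.inl ⟨β, ?_, rfl⟩)
    rcases eq_or_ne β 0 with hb | hb
    · exact absurd (by simp [hb]) h1
    · exact Ordinal.one_le_iff_ne_zero.mpr hb
  · exact Or.inr (Or.inr ⟨h1, h2⟩)

section Basic
variable [Group G] [TopologicalSpace G] [TopologicalSpace X] [MulAction G X]
  {α β : Ordinal} {a b : X} {P Q : Set G}

theorem hle_le_one (hα : α ≤ 1) :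
    HLe α a P b Q ↔ closure ((· • a) '' P) ⊆ closure ((· • b) '' Q) := by
  rw [HLe]; rw [if_pos hα]

theorem hle_succ (hβ : 1 ≤ β) :
    HLe (β + 1) a P b Q ↔ ∀ W₀ : Set G, IsOpen W₀ → W₀.Nonempty → W₀ ⊆ P →
      ∃ W₁ : Set G, IsOpen W₁ ∧ W₁.Nonempty ∧ W₁ ⊆ Q ∧ HLe β b W₁ a W₀ := by
  have h1 : ¬ (β + 1 ≤ 1) := ord_succ_not_le_one hβ
  have h2 : ∃ γ : Ordinal, β + 1 = γ + 1 := ⟨β, rfl⟩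
  have h3 : h2.choose = β := (ord_succ_inj h2.choose_spec).symm
  rw [HLe]; rw [if_neg h1, dif_pos h2, h3]

theorem hle_limit (h1 : ¬ α ≤ 1) (h2 : ¬ ∃ β : Ordinal, α = β + 1) :
    HLe α a P b Q ↔ ∀ β, 1 ≤ β → β < α → HLe β a P b Q := by
  rw [HLe]; rw [if_neg h1, dif_neg h2]

theorem hle_anti_left {a b : X} : ∀ (α : Ordinal) {P P' Q : Set G}, P' ⊆ P →
    HLe α a P b Q → HLe α a P' b Q := by
  intro α
  induction α using Ordinal.induction with
  | _ α IH =>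
  intro P P' Q hsub h
  rcases ord_cases α with h1 | ⟨β, hβ, rfl⟩ | ⟨h1, h2⟩
  · rw [hle_le_one h1] at h ⊢
    exact (closure_mono (image_mono hsub)).trans h
  · rw [hle_succ hβ] at h ⊢
    exact fun W₀ ho hne hs => h W₀ ho hne (hs.trans hsub)
  · rw [hle_limit h1 h2] at h ⊢
    exact fun β hb hlt => IH β hlt hsub (h β hb hlt)
end Basic

section Mono
variable [Group G] [TopologicalSpace G] [TopologicalSpace X] [MulAction G X]
  [ContinuousSMul G X] [RegularSpace X]

theorem hle_mono_ord : ∀ (α : Ordinal) {β : Ordinal} {a b : X} {P Q : Set G}, IsOpen P →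
    β ≤ α → HLe α a P b Q → HLe β a P b Q := by
  intro α
  induction α using Ordinal.induction with
  | _ α IH =>
  intro β a b P Q hP hβα h
  rcases ord_cases α with h1 | ⟨δ, hδ, rfl⟩ | ⟨h1, h2⟩
  · rw [hle_le_one h1] at h; rw [hle_le_one (hβα.trans h1)]; exact h
  · have h' := h
    rw [hle_succ hδ] at h'
    have key2 : closure ((· • a) '' P) ⊆ closure ((· • b) '' Q) := by
      refine closure_minimal ?_ isClosed_closure
      rintro _ ⟨g, hg, rfl⟩
      rw [mem_closure_iff]
      intro O hO hgO
      obtain ⟨s, ⟨hsn, hsc⟩, hsO⟩ := (closed_nhds_basis (g • a)).mem_iff.mp (hO.mem_nhds hgO)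
      set U' := interior s with hU'
      have hgU' : g • a ∈ U' := mem_interior_iff_mem_nhds.mpr hsn
      have hclU' : closure U' ⊆ O := (closure_mono interior_subset).trans (hsc.closure_subset.trans hsO)
      set W₀ := P ∩ (fun k : G => k • a) ⁻¹' U' with hW₀
      have hW₀o : IsOpen W₀ := hP.inter (isOpen_interior.preimage (continuous_id.smul continuous_const))
      obtain ⟨W₁, hW₁o, hW₁ne, hW₁Q, hW₁⟩ := h' W₀ hW₀o ⟨g, hg, hgU'⟩ inter_subset_left
      have hcl : closure ((· • b) '' W₁) ⊆ closure ((· • a) '' W₀) := by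
        have := IH δ (ord_lt_succ δ) hW₁o hδ hW₁
        rw [hle_le_one le_rfl] at this; exact this
      obtain ⟨k, hk⟩ := hW₁ne
      refine ⟨k • b, ?_, ⟨k, hW₁Q hk, rfl⟩⟩
      apply hclU'
      have him : (· • a) '' W₀ ⊆ U' := by rintro _ ⟨w, hw, rfl⟩; exact hw.2
      exact (closure_mono him) (hcl (subset_closure ⟨k, hk, rfl⟩))
    have key1 : ∀ γ, 1 ≤ γ → γ ≤ δ → HLe (γ + 1) a P b Q := by
      intro γ h1γ hγδ
      rw [hle_succ h1γ]
      intro W₀ o ne s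
      obtain ⟨W₁, p1, p2, p3, p4⟩ := h' W₀ o ne s
      exact ⟨W₁, p1, p2, p3, IH δ (ord_lt_succ δ) p1 hγδ p4⟩
    have key3 : HLe δ a P b Q := by
      rcases ord_cases δ with d1 | ⟨ε, hε, rfl⟩ | ⟨d1, d2⟩
      · rw [hle_le_one d1]; exact key2
      · exact key1 ε hε (le_of_lt (ord_lt_succ ε))
      · rw [hle_limit d1 d2]
        intro γ h1γ hγδ
        exact IH (γ + 1) (ord_succ_lt_succ hγδ) hP (le_of_lt (ord_lt_succ γ))
          (key1 γ h1γ (le_of_lt hγδ))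
    rcases eq_or_lt_of_le hβα with rfl | hlt
    · exact h
    · exact IH δ (ord_lt_succ δ) hP (ord_lt_succ_iff.mp hlt) key3
  · rw [hle_limit h1 h2] at h
    rcases eq_or_lt_of_le hβα with rfl | hlt
    · rw [hle_limit h1 h2]; exact h
    · by_cases hb1 : 1 ≤ β
      · exact h β hb1 hlt
      · have hβ0 : β = 0 := by
          rcases eq_or_ne β 0 with h0 | h0
          · exact h0
          · exact absurd (Ordinal.one_le_iff_ne_zero.mpr h0) hb1
        have h1' := h 1 le_rfl (lt_of_not_ge h1)
        rw [hle_le_one le_rfl] at h1'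
        rw [hβ0, hle_le_one (by simp)]
        exact h1'
end Mono



section Baire
variable [TopologicalSpace G] [PolishSpace G]

theorem open_nonempty_not_meagre {O : Set G} (hO : IsOpen O) (hne : O.Nonempty) :
    ¬ IsMeagre O := by
  intro h
  haveI : BaireSpace G := by letI := TopologicalSpace.upgradeIsCompletelyMetrizable G; infer_instance
  have hd : Dense Oᶜ := dense_of_mem_residual h
  obtain ⟨p, hp1, hp2⟩ := hd.inter_open_nonempty O hO hne
  exact hp2 hp1

theorem meagre_dense {W S W' : Set G} (hWS : IsMeagre (W \ S)) (hW' : IsOpen W')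
    (hne : W'.Nonempty) (hsub : W' ⊆ W) : (W' ∩ S).Nonempty := by
  by_contra h
  rw [not_nonempty_iff_eq_empty] at h
  have hsub2 : W' ⊆ W \ S := fun g hg =>
    ⟨hsub hg, fun hgS => (eq_empty_iff_forall_notMem.mp h g) ⟨hg, hgS⟩⟩
  exact open_nonempty_not_meagre hW' hne (hWS.mono hsub2)
end Baire

section Forward
variable [Group G] [TopologicalSpace G] [IsTopologicalGroup G] [PolishSpace G]
  [TopologicalSpace X] [MulAction G X] [ContinuousSMul G X]

theorem vaught_to_hle : ∀ (α : Ordinal) (x y : X) (V W : Set G), IsOpen V → IsOpen W →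
    y ∈ vaughtStar ((· • x) '' V) W → HLe α y W x V := by
  intro α
  induction α using Ordinal.induction with
  | _ α IH =>
  intro x y V W hV hW hy
  have hy' : IsMeagre (W \ {g : G | g • y ∈ (· • x) '' V}) := hy
  rcases ord_cases α with h1 | ⟨δ, hδ, rfl⟩ | ⟨h1, h2⟩
  · rw [hle_le_one h1]
    refine closure_minimal ?_ isClosed_closure
    rintro _ ⟨g, hgW, rfl⟩
    have hTc : IsClosed {k : G | k • y ∈ closure ((· • x) '' V)} :=
      IsClosed.preimage (continuous_id.smul continuous_const) isClosed_closure
    have hmem : g ∈ closure (W ∩ {g : G | g • y ∈ (· • x) '' V}) := by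
      rw [mem_closure_iff]
      intro O hO hgO
      obtain ⟨p, ⟨hpO, hpW⟩, hpS⟩ := meagre_dense hy' (hO.inter hW) ⟨g, hgO, hgW⟩
        inter_subset_right
      exact ⟨p, hpO, hpW, hpS⟩
    have hsub : W ∩ {g : G | g • y ∈ (· • x) '' V} ⊆ {k : G | k • y ∈ closure ((· • x) '' V)} :=
      fun k hk => subset_closure hk.2
    exact (closure_minimal hsub hTc) hmem
  · rw [hle_succ hδ]
    intro W₀ hW₀o hW₀ne hW₀W
    obtain ⟨g, hgW₀, hgS⟩ := meagre_dense hy' hW₀o hW₀ne hW₀W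
    obtain ⟨h, hhV, hhx0⟩ := hgS
    have hhx : h • x = g • y := hhx0
    have hkey : (g⁻¹ * h) • x = y := by
      rw [mul_smul, hhx, ← mul_smul, inv_mul_cancel, one_smul]
    set W₁ : Set G := V ∩ (· * (g⁻¹ * h)) '' W₀ with hW₁def
    have hW₁o : IsOpen W₁ := by
      rw [hW₁def, Set.image_mul_right]
      exact hV.inter (hW₀o.preimage (continuous_mul_right _))
    have hhW₁ : h ∈ W₁ := ⟨hhV, ⟨g, hgW₀, by group⟩⟩
    refine ⟨W₁, hW₁o, ⟨h, hhW₁⟩, inter_subset_left, ?_⟩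
    apply IH δ (ord_lt_succ δ) y x W₀ W₁ hW₀o hW₁o
    show IsMeagre (W₁ \ {k : G | k • x ∈ (· • y) '' W₀})
    have hempty : W₁ \ {k : G | k • x ∈ (· • y) '' W₀} = ∅ := by
      rw [eq_empty_iff_forall_notMem]
      rintro k ⟨⟨hkV, ⟨w, hw, rfl⟩⟩, hk2⟩
      exact hk2 ⟨w, hw, by rw [mul_smul, hkey]⟩
    rw [hempty]
    exact IsMeagre.empty
  · rw [hle_limit h1 h2]
    exact fun β hb hlt => IH β hlt x y V W hV hW hy
end Forward

section Step
variable [Group G] [TopologicalSpace G] [IsTopologicalGroup G] [PolishSpace G]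
  [TopologicalSpace X] [MulAction G X] [ContinuousSMul G X] [RegularSpace X]

theorem aleph1_pos : (1 : Ordinal.{u}) < (Cardinal.aleph 1).ord :=
  lt_of_lt_of_le Ordinal.one_lt_omega0
    (Ordinal.omega0_le_of_isSuccLimit (Cardinal.isSuccLimit_ord (le_of_lt Cardinal.aleph0_lt_aleph_one)))

theorem aleph1_succ_lt {α : Ordinal.{u}} (h : α < (Cardinal.aleph 1).ord) :
    α + 1 < (Cardinal.aleph 1).ord := by
  rw [Ordinal.add_one_eq_succ]
  exact (Cardinal.isSuccLimit_ord (le_of_lt Cardinal.aleph0_lt_aleph_one)).succ_lt h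

theorem good_step {a b : X} {P Q : Set G}
    (hH : ∀ α : Ordinal.{u}, α < (Cardinal.aleph 1).ord → 1 ≤ α → HLe α a P b Q)
    {P₀ : Set G} (hP₀o : IsOpen P₀) (hP₀ne : P₀.Nonempty) (hP₀P : P₀ ⊆ P) :
    ∃ Q₁ : Set G, IsOpen Q₁ ∧ Q₁.Nonempty ∧ Q₁ ⊆ Q ∧
      ∀ α : Ordinal.{u}, α < (Cardinal.aleph 1).ord → 1 ≤ α → HLe α b Q₁ a P₀ := by
  classical
  set ω₁ := (Cardinal.aleph 1).ord with hω₁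
  set B := TopologicalSpace.countableBasis G with hB
  have hBb := TopologicalSpace.isBasis_countableBasis G
  have hBne : B.Nonempty := by
    obtain ⟨v, hvB, _, _⟩ := hBb.exists_subset_of_mem_open (mem_univ (1 : G)) isOpen_univ
    exact ⟨v, hvB⟩
  obtain ⟨e, he⟩ := (TopologicalSpace.countable_countableBasis G).exists_eq_range hBne
  have main : ∀ α : Ordinal.{u}, α < ω₁ → 1 ≤ α →
      ∃ n : ℕ, (e n).Nonempty ∧ e n ⊆ Q ∧ HLe α b (e n) a P₀ := by
    intro α hα h1α
    have hsucc := hH (α + 1) (aleph1_succ_lt hα) (h1α.trans (le_of_lt (ord_lt_succ α)))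
    rw [hle_succ h1α] at hsucc
    obtain ⟨W₁, hW₁o, hW₁ne, hW₁Q, hW₁⟩ := hsucc P₀ hP₀o hP₀ne hP₀P
    obtain ⟨p, hp⟩ := hW₁ne
    obtain ⟨v, hvB, hpv, hvW₁⟩ := hBb.exists_subset_of_mem_open hp hW₁o
    have : v ∈ range e := he ▸ hvB
    obtain ⟨n, hn⟩ := this
    refine ⟨n, ?_, ?_, ?_⟩
    · rw [hn]; exact ⟨p, hpv⟩
    · rw [hn]; exact hvW₁.trans hW₁Q
    · exact hle_anti_left α (hn ▸ hvW₁) hW₁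
  set F : ℕ → Set Ordinal.{u} := fun n =>
    {α | α < ω₁ ∧ 1 ≤ α ∧ (e n).Nonempty ∧ e n ⊆ Q ∧ HLe α b (e n) a P₀} with hF
  have hcof : ∃ n, ∀ β, β < ω₁ → ∃ α ∈ F n, β ≤ α := by
    by_contra hc
    push_neg at hc
    choose bnd hbnd1 hbnd2 using hc
    set bnd' : ULift.{u} ℕ → Ordinal.{u} := fun i => bnd i.down with hbnd'
    set β : Ordinal.{u} := max (iSup bnd') 1 with hβdef
    have hsup : iSup bnd' < ω₁ := by
      refine Ordinal.iSup_lt_ord ?_ (fun i => hbnd1 i.down)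
      rw [Cardinal.isRegular_aleph_one.cof_eq, Cardinal.mk_uLift, Cardinal.mk_nat,
        Cardinal.lift_aleph0]
      exact Cardinal.aleph0_lt_aleph_one
    have hβ : β < ω₁ := max_lt hsup aleph1_pos
    obtain ⟨n, hn1, hn2, hn3⟩ := main β hβ (le_max_right _ _)
    have hmem : β ∈ F n := ⟨hβ, le_max_right _ _, hn1, hn2, hn3⟩
    have h1 := hbnd2 n β hmem
    have h2 : bnd n ≤ β := le_trans (Ordinal.le_iSup bnd' ⟨n⟩) (le_max_left _ _)
    exact absurd (lt_of_lt_of_le h1 h2) (lt_irrefl β)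
  obtain ⟨n, hn⟩ := hcof
  obtain ⟨α₀, hα₀F, _⟩ := hn 1 aleph1_pos
  have heno : IsOpen (e n) :=
    TopologicalSpace.isOpen_of_mem_countableBasis (he ▸ (mem_range_self n))
  refine ⟨e n, heno, hα₀F.2.2.1, hα₀F.2.2.2.1, ?_⟩
  intro α hα h1α
  obtain ⟨α', hα'F, hαα'⟩ := hn α hα
  exact hle_mono_ord α' heno hαα' hα'F.2.2.2.2
end Step

structure BFq (G X : Type*) where
  a : X
  b : X
  P : Set G
  Q : Set G

section Fusion
variable [Group G] [TopologicalSpace G] [IsTopologicalGroup G] [PolishSpace G]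
  [TopologicalSpace X] [PolishSpace X] [MulAction G X] [ContinuousSMul G X]

theorem fusion {x y : X} {V W : Set G} (hV : IsOpen V) (hVne : V.Nonempty)
    (hW : IsOpen W) (hWne : W.Nonempty)
    (hH : ∀ α : Ordinal.{u}, α < (Cardinal.aleph 1).ord → 1 ≤ α → HLe α y W x V) :
    ∃ g ∈ W, ∃ h ∈ V, g • y = h • x := by
  classical
  letI mG := TopologicalSpace.upgradeIsCompletelyMetrizable G
  letI mX := TopologicalSpace.upgradeIsCompletelyMetrizable X
  haveI : RegularSpace X := inferInstance
  set ω₁ := (Cardinal.aleph 1).ord with hω₁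
  set GoodBF : BFq G X → Prop := fun s => IsOpen s.P ∧ s.P.Nonempty ∧ IsOpen s.Q ∧
    s.Q.Nonempty ∧ ∀ α : Ordinal.{u}, α < ω₁ → 1 ≤ α → HLe α s.a s.P s.b s.Q with hGood
  -- shrinking an open set around a point
  have shrink : ∀ (P : Set G) (aa : X), IsOpen P → P.Nonempty → ∀ n : ℕ,
      ∃ (P' : Set G) (g : G), g ∈ P' ∧ IsOpen P' ∧ closure P' ⊆ P ∧
        P' ⊆ Metric.ball g ((1/2 : ℝ)^n) ∧
        ∀ k ∈ P', k • aa ∈ Metric.ball (g • aa) ((1/2 : ℝ)^n) := by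
    intro P aa hPo hPne n
    obtain ⟨g₀, hg₀⟩ := hPne
    have hε : (0:ℝ) < (1/2 : ℝ)^n := by positivity
    set O := (P ∩ Metric.ball g₀ ((1/2:ℝ)^n)) ∩
      (fun k : G => k • aa) ⁻¹' (Metric.ball (g₀ • aa) ((1/2:ℝ)^n)) with hO
    have hOo : IsOpen O := (hPo.inter Metric.isOpen_ball).inter
      (Metric.isOpen_ball.preimage (continuous_id.smul continuous_const))
    have hg₀O : g₀ ∈ O := ⟨⟨hg₀, Metric.mem_ball_self hε⟩, Metric.mem_ball_self hε⟩
    obtain ⟨r, hr, hball⟩ := Metric.nhds_basis_closedBall.mem_iff.mp (hOo.mem_nhds hg₀O)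
    have hsubO : Metric.ball g₀ r ⊆ O := (Metric.ball_subset_closedBall).trans hball
    refine ⟨Metric.ball g₀ r, g₀, Metric.mem_ball_self hr, Metric.isOpen_ball, ?_, ?_, ?_⟩
    · exact (Metric.closure_ball_subset_closedBall.trans hball).trans
        (fun z hz => hz.1.1)
    · exact fun z hz => (hsubO hz).1.2
    · exact fun k hk => (hsubO hk).2
  -- one step of the construction
  have step : ∀ s : {s : BFq G X // GoodBF s}, ∀ n : ℕ,
      ∃ (s' : {s : BFq G X // GoodBF s}) (g : G),
        s'.1.a = s.1.b ∧ s'.1.b = s.1.a ∧ s'.1.P ⊆ s.1.Q ∧ closure s'.1.Q ⊆ s.1.P ∧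
        g ∈ s'.1.Q ∧ s'.1.Q ⊆ Metric.ball g ((1/2 : ℝ)^n) ∧
        ∀ k ∈ s'.1.Q, k • s.1.a ∈ Metric.ball (g • s.1.a) ((1/2 : ℝ)^n) := by
    rintro ⟨s, hPo, hPne, hQo, hQne, hH'⟩ n
    obtain ⟨P', g, hgP', hP'o, hP'cl, hP'ball, hP'im⟩ := shrink s.P s.a hPo hPne n
    have hP'P : P' ⊆ s.P := subset_closure.trans hP'cl
    have hP'ne : P'.Nonempty := ⟨g, hgP'⟩
    obtain ⟨Q₁, hQ₁o, hQ₁ne, hQ₁Q, hQ₁good⟩ := good_step hH' hP'o hP'ne hP'P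
    exact ⟨⟨⟨s.b, s.a, Q₁, P'⟩, hQ₁o, hQ₁ne, hP'o, hP'ne, hQ₁good⟩, g,
      rfl, rfl, hQ₁Q, hP'cl, hgP', hP'ball, hP'im⟩
  choose Fn cn hst using step
  set s₀ : {s : BFq G X // GoodBF s} := ⟨⟨y, x, W, V⟩, hW, hWne, hV, hVne, hH⟩ with hs₀
  set seq : ℕ → {s : BFq G X // GoodBF s} := fun n => Nat.rec s₀ (fun k s => Fn s k) n
    with hseqdef
  have hseq : ∀ n, seq (n + 1) = Fn (seq n) n := fun n => rfl
  set A : ℕ → Set G := fun n => (seq (n+1)).1.Q with hA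
  set pt : ℕ → X := fun n => (seq n).1.a with hpt
  set ctr : ℕ → G := fun n => cn (seq n) n with hctr
  have hf : ∀ n, (seq (n+1)).1.a = (seq n).1.b ∧ (seq (n+1)).1.b = pt n ∧
      (seq (n+1)).1.P ⊆ (seq n).1.Q ∧ closure (A n) ⊆ (seq n).1.P ∧
      ctr n ∈ A n ∧ A n ⊆ Metric.ball (ctr n) ((1/2:ℝ)^n) ∧
      ∀ k ∈ A n, k • pt n ∈ Metric.ball (ctr n • pt n) ((1/2:ℝ)^n) := by
    intro n
    have := hst (seq n) n
    rw [← hseq n] at this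
    exact this
  have hctrA : ∀ n, ctr n ∈ A n := fun n => (hf n).2.2.2.2.1
  -- parity of pt
  have hpt0 : pt 0 = y := rfl
  have hpt1 : pt 1 = x := (hf 0).1
  have hptstep : ∀ n, pt (n + 2) = pt n := by
    intro n
    have h1 : pt (n + 2) = (seq (n + 1)).1.b := (hf (n + 1)).1
    exact h1.trans ((hf n).2.1)
  have hpteven : ∀ k, pt (2 * k) = y := by
    intro k
    induction k with
    | zero => exact hpt0
    | succ k ih =>
      have h2 : 2 * (k + 1) = 2 * k + 2 := by ring
      rw [h2, hptstep]; exact ih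
  have hptodd : ∀ k, pt (2 * k + 1) = x := by
    intro k
    induction k with
    | zero => exact hpt1
    | succ k ih =>
      have h2 : 2 * (k + 1) + 1 = (2 * k + 1) + 2 := by ring
      rw [h2]; exact (hptstep (2 * k + 1)).trans ih
  -- nesting of the A's
  have hAcl2 : ∀ n, closure (A (n + 2)) ⊆ A n := by
    intro n
    exact ((hf (n + 2)).2.2.2.1).trans ((hf (n + 1)).2.2.1)
  have hA2 : ∀ n, A (n + 2) ⊆ A n := fun n => subset_closure.trans (hAcl2 n)
  have hAmono2 : ∀ n k, A (n + 2 * k) ⊆ A n := by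
    intro n k
    induction k with
    | zero => simp
    | succ k ih =>
      have h2 : n + 2 * (k + 1) = (n + 2 * k) + 2 := by ring
      rw [h2]; exact (hA2 _).trans ih
  have hAevensub : ∀ k l, k ≤ l → A (2 * l) ⊆ A (2 * k) := by
    intro k l h
    have h2 : 2 * l = 2 * k + 2 * (l - k) := by omega
    rw [h2]; exact hAmono2 _ _
  have hAoddsub : ∀ k l, k ≤ l → A (2 * l + 1) ⊆ A (2 * k + 1) := by
    intro k l h
    have h2 : 2 * l + 1 = (2 * k + 1) + 2 * (l - k) := by omega
    rw [h2]; exact hAmono2 _ _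
  -- the decreasing chain of closed sets in X
  set D : ℕ → Set X := fun n => closure ((· • pt n) '' (A n)) with hD
  have hDdec : ∀ n, D (n + 1) ⊆ D n := by
    intro n
    obtain ⟨hPo', hPne', hQo', hQne', hH'⟩ := (seq (n + 1)).2
    have h1 := hH' 1 aleph1_pos le_rfl
    rw [hle_le_one le_rfl] at h1
    have hsub : A (n + 1) ⊆ (seq (n + 1)).1.P := subset_closure.trans (hf (n + 1)).2.2.2.1
    calc D (n + 1) ⊆ closure ((· • pt (n + 1)) '' (seq (n + 1)).1.P) :=
          closure_mono (image_mono hsub)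
      _ ⊆ D n := by
          have hb : (seq (n + 1)).1.b = pt n := (hf n).2.1
          change _ ⊆ closure ((fun g : G => g • pt n) '' A n)
          rw [← hb]
          exact h1
  have hDmono : ∀ N n, N ≤ n → D n ⊆ D N := by
    intro N n h
    induction n, h using Nat.le_induction with
    | base => exact subset_rfl
    | succ n hn ih => exact (hDdec n).trans ih
  have hDball : ∀ n, D n ⊆ Metric.closedBall (ctr n • pt n) ((1/2 : ℝ)^n) := by
    intro n
    have h8 := (hf n).2.2.2.2.2.2
    have himg : (· • pt n) '' (A n) ⊆ Metric.ball (ctr n • pt n) ((1/2 : ℝ)^n) := by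
      rintro _ ⟨k, hk, rfl⟩; exact h8 k hk
    exact (closure_mono himg).trans Metric.closure_ball_subset_closedBall
  -- Cauchy sequences in G
  set uu : ℕ → G := fun k => ctr (2 * k) with huu
  set ww : ℕ → G := fun k => ctr (2 * k + 1) with hww
  have htend : Filter.Tendsto (fun N : ℕ => 2 * (1/2 : ℝ)^N) Filter.atTop (nhds 0) := by
    have := (tendsto_pow_atTop_nhds_zero_of_lt_one (by norm_num : (0:ℝ) ≤ 1/2)
      (by norm_num : (1/2 : ℝ) < 1)).const_mul (2 : ℝ)
    simpa using this
  have htend2 : Filter.Tendsto (fun N : ℕ => 2 * (1/2 : ℝ)^(2 * N)) Filter.atTop (nhds 0) := by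
    have h2 : Filter.Tendsto (fun k : ℕ => 2 * k) Filter.atTop Filter.atTop :=
      Filter.tendsto_atTop_atTop.mpr (fun b => ⟨b, fun a ha => by omega⟩)
    exact htend.comp h2
  have hball_dist : ∀ (n : ℕ) (p q : G), p ∈ Metric.ball (ctr n) ((1/2 : ℝ)^n) →
      q ∈ Metric.ball (ctr n) ((1/2 : ℝ)^n) → dist p q ≤ 2 * (1/2 : ℝ)^n := by
    intro n p q hp hq
    rw [Metric.mem_ball] at hp hq
    calc dist p q ≤ dist p (ctr n) + dist (ctr n) q := dist_triangle _ _ _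
      _ ≤ (1/2 : ℝ)^n + (1/2 : ℝ)^n := by
          rw [dist_comm (ctr n) q]; exact add_le_add hp.le hq.le
      _ = 2 * (1/2 : ℝ)^n := by ring
  have huu_cauchy : CauchySeq uu := by
    apply cauchySeq_of_le_tendsto_0 (fun N => 2 * (1/2 : ℝ)^(2 * N)) _ htend2
    intro n m N hn hm
    have h1 := (hf (2 * N)).2.2.2.2.2.1 (hAevensub N n hn (hctrA (2 * n)))
    have h2 := (hf (2 * N)).2.2.2.2.2.1 (hAevensub N m hm (hctrA (2 * m)))
    exact hball_dist (2 * N) _ _ h1 h2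
  have hww_cauchy : CauchySeq ww := by
    apply cauchySeq_of_le_tendsto_0 (fun N => 2 * (1/2 : ℝ)^(2 * N + 1)) _ ?_
    · intro n m N hn hm
      have h1 := (hf (2 * N + 1)).2.2.2.2.2.1 (hAoddsub N n hn (hctrA (2 * n + 1)))
      have h2 := (hf (2 * N + 1)).2.2.2.2.2.1 (hAoddsub N m hm (hctrA (2 * m + 1)))
      exact hball_dist (2 * N + 1) _ _ h1 h2
    · have h2 : Filter.Tendsto (fun k : ℕ => 2 * k + 1) Filter.atTop Filter.atTop :=
        Filter.tendsto_atTop_atTop.mpr (fun b => ⟨b, fun a ha => by omega⟩)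
      exact htend.comp h2
  obtain ⟨g, hg_lim⟩ := cauchySeq_tendsto_of_complete huu_cauchy
  obtain ⟨h, hh_lim⟩ := cauchySeq_tendsto_of_complete hww_cauchy
  -- the Cauchy sequence of images in X
  set vv : ℕ → X := fun n => ctr n • pt n with hvv
  have hv_memD : ∀ N n, N ≤ n → vv n ∈ D N := fun N n hle =>
    hDmono N n hle (subset_closure ⟨ctr n, hctrA n, rfl⟩)
  have hvv_cauchy : CauchySeq vv := by
    apply cauchySeq_of_le_tendsto_0 (fun N => 2 * (1/2 : ℝ)^N) _ htend
    intro n m N hn hm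
    have h1 := hDball N (hv_memD N n hn)
    have h2 := hDball N (hv_memD N m hm)
    rw [Metric.mem_closedBall] at h1 h2
    calc dist (vv n) (vv m) ≤ dist (vv n) (ctr N • pt N) + dist (ctr N • pt N) (vv m) :=
          dist_triangle _ _ _
      _ ≤ (1/2 : ℝ)^N + (1/2 : ℝ)^N := by
          rw [dist_comm (ctr N • pt N) (vv m)]; exact add_le_add h1 h2
      _ = 2 * (1/2 : ℝ)^N := by ring
  obtain ⟨z, hz⟩ := cauchySeq_tendsto_of_complete hvv_cauchy
  have hmul2 : Filter.Tendsto (fun k : ℕ => 2 * k) Filter.atTop Filter.atTop :=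
    Filter.tendsto_atTop_atTop.mpr (fun b => ⟨b, fun a ha => by omega⟩)
  have hmul21 : Filter.Tendsto (fun k : ℕ => 2 * k + 1) Filter.atTop Filter.atTop :=
    Filter.tendsto_atTop_atTop.mpr (fun b => ⟨b, fun a ha => by omega⟩)
  have hgy : g • y = z := by
    have heq : ∀ k, vv (2 * k) = uu k • y := by
      intro k
      show ctr (2 * k) • pt (2 * k) = uu k • y
      rw [hpteven k]
    have h1 : Filter.Tendsto (fun k => uu k • y) Filter.atTop (nhds z) := by
      have hcomp := hz.comp hmul2
      have hfe : (fun k : ℕ => uu k • y) = (vv ∘ fun k : ℕ => 2 * k) :=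
        funext fun k => (heq k).symm
      rw [hfe]; exact hcomp
    have h2 : Filter.Tendsto (fun k => uu k • y) Filter.atTop (nhds (g • y)) :=
      hg_lim.smul tendsto_const_nhds
    exact tendsto_nhds_unique h2 h1
  have hhx : h • x = z := by
    have heq : ∀ k, vv (2 * k + 1) = ww k • x := by
      intro k
      show ctr (2 * k + 1) • pt (2 * k + 1) = ww k • x
      rw [hptodd k]
    have h1 : Filter.Tendsto (fun k => ww k • x) Filter.atTop (nhds z) := by
      have hcomp := hz.comp hmul21
      have hfe : (fun k : ℕ => ww k • x) = (vv ∘ fun k : ℕ => 2 * k + 1) :=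
        funext fun k => (heq k).symm
      rw [hfe]; exact hcomp
    have h2 : Filter.Tendsto (fun k => ww k • x) Filter.atTop (nhds (h • x)) :=
      hh_lim.smul tendsto_const_nhds
    exact tendsto_nhds_unique h2 h1
  have hgW : g ∈ W := by
    have hmem : ∀ k, uu k ∈ A 0 := fun k => by
      have := hAevensub 0 k (Nat.zero_le k) (hctrA (2 * k))
      simpa using this
    have hcl : g ∈ closure (A 0) :=
      mem_closure_of_tendsto hg_lim (Filter.Eventually.of_forall hmem)
    exact (hf 0).2.2.2.1 hcl
  have hhV : h ∈ V := by
    have hmem : ∀ k, ww k ∈ A 1 := fun k => by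
      have := hAoddsub 0 k (Nat.zero_le k) (hctrA (2 * k + 1))
      simpa using this
    have hcl : h ∈ closure (A 1) :=
      mem_closure_of_tendsto hh_lim (Filter.Eventually.of_forall hmem)
    exact (hf 0).2.2.1 ((hf 1).2.2.2.1 hcl)
  exact ⟨g, hgW, h, hhV, by rw [hgy, hhx]⟩
end Fusion

theorem stmt16 [Group G] [TopologicalSpace G] [IsTopologicalGroup G] [PolishSpace G]
    [TopologicalSpace X] [PolishSpace X] [MulAction G X] [ContinuousSMul G X]
    (x y : X) (V W : Set G)
    (hV : IsOpen V) (hVne : V.Nonempty) (hW : IsOpen W) (hWne : W.Nonempty) :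
    (y ∈ vaughtStar (G := G) ((· • x) '' V) W ↔
      ∀ α : Ordinal, 1 ≤ α → α < (Cardinal.aleph 1).ord → HLe α y W x V) ∧
    ((∀ α : Ordinal, 1 ≤ α → α < (Cardinal.aleph 1).ord → HLe α y W x V) →
      ∃ g : G, g • y = x) := by
  haveI : RegularSpace X := by letI := TopologicalSpace.upgradeIsCompletelyMetrizable X; infer_instance
  constructor
  · constructor
    · intro hy α _ _
      exact vaught_to_hle α x y V W hV hW hy
    · intro hH
      set S : Set G := {g : G | g • y ∈ (· • x) '' V} with hS
      have hdense : ∀ W' : Set G, IsOpen W' → W'.Nonempty → W' ⊆ W → (W' ∩ S).Nonempty := by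
        intro W' hW'o hW'ne hW'W
        have hH' : ∀ α : Ordinal, α < (Cardinal.aleph 1).ord → 1 ≤ α → HLe α y W' x V :=
          fun α hα h1α => hle_anti_left α hW'W (hH α h1α hα)
        obtain ⟨g, hgW', h, hhV, hgh⟩ := fusion hV hVne hW'o hW'ne hH'
        exact ⟨g, hgW', ⟨h, hhV, hgh.symm⟩⟩
      have hSo : IsOpen S := by
        rw [isOpen_iff_forall_mem_open]
        intro g₁ hg₁
        obtain ⟨v₁, hv₁V, hv₁0⟩ := hg₁
        have hv₁ : v₁ • x = g₁ • y := hv₁0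
        have hkey : (v₁⁻¹ * g₁) • y = x := by
          rw [mul_smul, ← hv₁, ← mul_smul, inv_mul_cancel, one_smul]
        refine ⟨(· * (v₁⁻¹ * g₁)) '' V, ?_, ?_, ⟨v₁, hv₁V, by group⟩⟩
        · rintro _ ⟨w, hwV, rfl⟩
          exact ⟨w, hwV, by rw [mul_smul, hkey]⟩
        · rw [Set.image_mul_right]
          exact hV.preimage (continuous_mul_right _)
      show IsMeagre (W \ S)
      have hCint : interior (closure (W \ S)) = ∅ := by
        by_contra hne
        rw [← Ne, ← Set.nonempty_iff_ne_empty] at hne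
        obtain ⟨p, hp⟩ := hne
        have h1 : ((interior (closure (W \ S))) ∩ (W \ S)).Nonempty :=
          (mem_closure_iff.mp (interior_subset hp)) _ isOpen_interior hp
        obtain ⟨q, hqO, hqWS⟩ := h1
        obtain ⟨r, ⟨hrO, hrW⟩, hrS⟩ := hdense (interior (closure (W \ S)) ∩ W)
          (isOpen_interior.inter hW) ⟨q, hqO, hqWS.1⟩ Set.inter_subset_right
        obtain ⟨t, htS, htWS⟩ := (mem_closure_iff.mp (interior_subset hrO)) S hSo hrS
        exact htWS.2 htS
      have hme : IsMeagre (closure (W \ S)) := by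
        unfold IsMeagre
        exact residual_of_dense_open isClosed_closure.isOpen_compl
          (interior_eq_empty_iff_dense_compl.mp hCint)
      exact hme.mono subset_closure
  · intro hH
    obtain ⟨g, hgW, h, hhV, hgh⟩ := fusion hV hVne hW hWne (fun α hα h1α => hH α h1α hα)
    exact ⟨h⁻¹ * g, by rw [mul_smul, hgh, ← mul_smul, inv_mul_cancel, one_smul]⟩
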